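/- arXiv:1607.01048 — 4 statements merged into one kernel-verified Lean document; each statement's English description precedes it below -/
import Mathlib

section
/- Let P > 0, a > 0 and d > 1 be real constants. Let (ℓ_n) and (k_n) be sequences with ℓ_n = ⌈a n^d⌉, k_n ≤ ℓ_n for all n, and k_n/n → c for some constant c > 0. Define θ_n = 2 ℓ_n H₂(k_n/ℓ_n) / (n log(1 + k_n P)). Then θ_n → 2 c (d − 1) as n → ∞. -/
open Filter

/-- Binary entropy function (natural logarithm); `H2 0 = H2 1 = 0`. -/
noncomputable def H2 (p : ℝ) : ℝ := -p * Real.log p - (1 - p) * Real.log (1 - p)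

/-!
Splitting `H₂(p) = -p log p - (1 - p) log (1 - p)` at `p = k/ℓ` gives
`ℓ H₂(k/ℓ) = k (log ℓ - log k) + R` with `0 ≤ R ≤ k`. Since `log ℓ ~ d log n`, `log k ~ log n` and
`log (1 + kP) ~ log n`, the numerator is `~ 2 c (d - 1) n log n` and the denominator `~ n log n`.
-/

open Real Topology

lemma H2_eq_negMulLog_add (p : ℝ) : H2 p = negMulLog p + negMulLog (1 - p) := by
  simp only [H2, negMulLog_def]; ring

lemma mul_negMulLog_div {k ℓ : ℝ} (hk : 0 < k) (hℓ : 0 < ℓ) :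
    ℓ * negMulLog (k / ℓ) = k * (log ℓ - log k) := by
  rw [negMulLog, log_div hk.ne' hℓ.ne']
  field_simp
  ring

lemma mul_H2_div_sub_mem_Icc {k ℓ : ℝ} (hk : 0 < k) (hkℓ : k ≤ ℓ) :
    ℓ * H2 (k / ℓ) - k * (log ℓ - log k) ∈ Set.Icc 0 k := by
  have hℓ : 0 < ℓ := hk.trans_le hkℓ
  have hp : k / ℓ ≤ 1 := (div_le_one hℓ).mpr hkℓ
  have hrem : ℓ * H2 (k / ℓ) - k * (log ℓ - log k) = ℓ * negMulLog (1 - k / ℓ) := by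
    rw [H2_eq_negMulLog_add, mul_add, mul_negMulLog_div hk hℓ]; ring
  rw [hrem]
  constructor
  · exact mul_nonneg hℓ.le (negMulLog_nonneg (by linarith) (by linarith [div_pos hk hℓ]))
  · calc ℓ * negMulLog (1 - k / ℓ) ≤ ℓ * (1 - (1 - k / ℓ)) :=
          mul_le_mul_of_nonneg_left (negMulLog_le_one_sub_self (by linarith)) hℓ.le
      _ = k := by field_simp; ring

lemma tendsto_log_div_log_of_tendsto_div_rpow {α : Type*} {l : Filter α} {f g : α → ℝ}
    {e L : ℝ} (hg : Tendsto g l atTop) (hL : 0 < L)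
    (hf : Tendsto (fun x => f x / g x ^ e) l (𝓝 L)) :
    Tendsto (fun x => log (f x) / log (g x)) l (𝓝 e) := by
  have hlog : Tendsto (fun x => log (g x)) l atTop := tendsto_log_atTop.comp hg
  have hrest : Tendsto (fun x => log (f x / g x ^ e) / log (g x) + e) l (𝓝 (0 + e)) :=
    (((continuousAt_log hL.ne').tendsto.comp hf).div_atTop hlog).add_const e
  rw [zero_add] at hrest
  refine hrest.congr' ?_
  filter_upwards [hg.eventually_gt_atTop 1, hf.eventually (eventually_gt_nhds hL)]
    with x hg1 hfpos
  have hgpos : 0 < g x := by linarith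
  have hge : 0 < g x ^ e := rpow_pos_of_pos hgpos e
  have hfx : 0 < f x := by simpa [div_pos_iff_of_pos_right hge] using hfpos
  have hlg : 0 < log (g x) := log_pos hg1
  rw [log_div hfx.ne' hge.ne', log_rpow hgpos]
  field_simp
  ring

lemma tendsto_mul_H2_div_mul_log {α : Type*} {l : Filter α} {g k ℓ : α → ℝ} {c d : ℝ}
    (hg : Tendsto g l atTop) (hc : 0 < c) (hk : Tendsto (fun x => k x / g x) l (𝓝 c))
    (hkℓ : ∀ x, k x ≤ ℓ x) (hℓ : Tendsto (fun x => log (ℓ x) / log (g x)) l (𝓝 d)) :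
    Tendsto (fun x => ℓ x * H2 (k x / ℓ x) / (g x * log (g x))) l (𝓝 (c * (d - 1))) := by
  have hlog : Tendsto (fun x => log (g x)) l atTop := tendsto_log_atTop.comp hg
  have hlogk : Tendsto (fun x => log (k x) / log (g x)) l (𝓝 1) :=
    tendsto_log_div_log_of_tendsto_div_rpow hg hc (by simpa only [rpow_one] using hk)
  have hkpos : ∀ᶠ x in l, 0 < k x := by
    filter_upwards [hg.eventually_gt_atTop 0, hk.eventually (eventually_gt_nhds hc)]
      with x hgx hkx
    exact (div_pos_iff_of_pos_right hgx).mp hkx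
  have hmain : Tendsto (fun x => k x / g x * (log (ℓ x) / log (g x) - log (k x) / log (g x)))
      l (𝓝 (c * (d - 1))) := hk.mul (hℓ.sub hlogk)
  have hbounds : ∀ᶠ x in l,
      0 ≤ (ℓ x * H2 (k x / ℓ x) - k x * (log (ℓ x) - log (k x))) / (g x * log (g x)) ∧
      (ℓ x * H2 (k x / ℓ x) - k x * (log (ℓ x) - log (k x))) / (g x * log (g x)) ≤
        k x / g x / log (g x) := by
    filter_upwards [hkpos, hg.eventually_gt_atTop 1] with x hkx hgx
    have hR := mul_H2_div_sub_mem_Icc hkx (hkℓ x)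
    have hglog : 0 < g x * log (g x) := mul_pos (by linarith) (log_pos hgx)
    rw [div_div]
    exact ⟨div_nonneg hR.1 hglog.le, div_le_div_of_nonneg_right hR.2 hglog.le⟩
  have hrem := tendsto_of_tendsto_of_tendsto_of_le_of_le' tendsto_const_nhds
    (hk.div_atTop hlog) (hbounds.mono fun _ h => h.1) (hbounds.mono fun _ h => h.2)
  have hsum := hmain.add hrem
  rw [add_zero] at hsum
  refine hsum.congr' ?_
  filter_upwards [hg.eventually_gt_atTop 1] with x hgx
  have hgpos : 0 < g x := by linarith
  have hlg : 0 < log (g x) := log_pos hgx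
  field_simp
  ring

/-- If `ℓ n = ⌈a n^d⌉` with `d > 1`, `k n ≤ ℓ n` and `k n / n → c > 0`, then the overhead
factor `θ_n = 2 ℓ_n H₂(k_n/ℓ_n) / (n log(1 + k_n P))` tends to `2 c (d - 1)`. -/
theorem stmt1 (P a d : ℝ) (hP : 0 < P) (ha : 0 < a) (hd : 1 < d)
    (ℓ : ℕ → ℕ) (k : ℕ → ℝ)
    (hℓ : ∀ n : ℕ, ℓ n = ⌈a * (n : ℝ) ^ d⌉₊)
    (hkℓ : ∀ n : ℕ, k n ≤ (ℓ n : ℝ))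
    (c : ℝ) (hc : 0 < c)
    (hkn : Tendsto (fun n : ℕ => k n / (n : ℝ)) atTop (nhds c)) :
    Tendsto (fun n : ℕ =>
        2 * (ℓ n : ℝ) * H2 (k n / (ℓ n : ℝ)) / ((n : ℝ) * Real.log (1 + k n * P)))
      atTop (nhds (2 * c * (d - 1))) := by
  have hn : Tendsto (fun n : ℕ => (n : ℝ)) atTop atTop := tendsto_natCast_atTop_atTop
  have hnd : Tendsto (fun n : ℕ => (n : ℝ) ^ d) atTop atTop :=
    (tendsto_rpow_atTop (by linarith)).comp hn
  have hℓ_div : Tendsto (fun n : ℕ => (ℓ n : ℝ) / (n : ℝ) ^ d) atTop (𝓝 a) := by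
    simpa only [hℓ, Function.comp_def] using (tendsto_nat_ceil_mul_div_atTop ha.le).comp hnd
  have hlogℓ := tendsto_log_div_log_of_tendsto_div_rpow hn ha hℓ_div
  have hSNR : Tendsto (fun n : ℕ => (1 + k n * P) / (n : ℝ) ^ (1 : ℝ)) atTop (𝓝 (c * P)) := by
    have h := (tendsto_const_nhds (x := (1 : ℝ)).div_atTop hn).add (hkn.mul_const P)
    rw [zero_add] at h
    refine h.congr fun n => ?_
    rw [rpow_one, add_div, mul_div_right_comm]
  have hlogSNR := tendsto_log_div_log_of_tendsto_div_rpow hn (mul_pos hc hP) hSNR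
  have hθ := ((tendsto_mul_H2_div_mul_log hn hc hkn hkℓ hlogℓ).div hlogSNR one_ne_zero).const_mul 2
  rw [div_one, ← mul_assoc] at hθ
  refine hθ.congr' ?_
  filter_upwards [eventually_gt_atTop 1, hlogSNR.eventually (eventually_gt_nhds one_pos)]
    with n hn1 hD
  have hlogn : 0 < log n := log_pos (by exact_mod_cast hn1)
  have hD : 0 < log (1 + k n * P) := by simpa [div_pos_iff_of_pos_right hlogn] using hD
  simp only [Pi.div_apply]
  field_simp
end

section
/- Let A > 0, B > 0 and w̄ ≥ 1 be constants. Let (k_ℓ), (a_ℓ), (b_ℓ) be sequences of positive reals with b_ℓ ≤ a_ℓ for all ℓ, k_ℓ/a_ℓ → a for some a ∈ [0,∞), k_ℓ/b_ℓ → b for some b ∈ (0,∞), and suppose ℓ·e^{−δ k_ℓ} → 0 for every δ > 0. Let (A_ℓ) be a sequence of reals with liminf_{ℓ→∞} A_ℓ = A. Define h_ℓ(w) = A_ℓ·log(1 + B w) − (a_ℓ/k_ℓ)·H₂(w/a_ℓ) for w ∈ [0, a_ℓ], and set c = min{ bA/(64(1 + Aa)), 1 }. Then there exists L such that for every ℓ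 ≥ L, any point w*_ℓ attaining the minimum of h_ℓ over the interval [w̄, b_ℓ] satisfies w*_ℓ = w̄ or w*_ℓ ∈ [c·b_ℓ, b_ℓ]. -/
/-!
Suppose a minimiser `x` of `h = A' log (1 + B ·) - (a / k) H₂ (· / a)` on `[w̄, b]` had
`w̄ < x < c b`. Being interior, it is a critical point: `A' B k = L (1 + B x)` with
`L = log ((a - x) / x)`, and as `A' B k ≥ A b₀ B b / 4` while `1 + B x ≤ 2 B c b`, this forces
`L ≥ 2`. Comparing `h x ≤ h w̄`, with `a H₂ (x / a) ≤ x (L + 2)`, gives `1 + B x ≤ e² (1 + B w̄)`;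
comparing `h x ≤ h b`, with `a H₂ (b / a) ≥ b log (a / b)` and `log a ≥ L`, gives `L ≤ 2 log b`
for large `b`. Hence `A' B k = O(log b)`, contradicting `k ≥ b₀ b / 2` and `b → ∞`.
-/

open Filter

open Real Set Asymptotics Topology

lemma H2_eq_binEntropy : H2 = binEntropy := by
  funext p
  simp only [H2, binEntropy, log_inv]
  ring

lemma mul_H2_div {x a : ℝ} (hx : 0 < x) (hxa : x < a) :
    a * H2 (x / a) = x * (log a - log x) + (a - x) * (log a - log (a - x)) := by
  have ha : 0 < a := hx.trans hxa
  rw [H2, one_sub_div ha.ne', log_div hx.ne' ha.ne', log_div (sub_pos.2 hxa).ne' ha.ne']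
  field_simp
  ring

lemma mul_H2_div_le {x a : ℝ} (hx : 0 < x) (h2x : 2 * x ≤ a) :
    a * H2 (x / a) ≤ x * (log (a - x) - log x + 2) := by
  have hax : 0 < a - x := by linarith
  have hlog_a : log a ≤ log (a - x) + 1 := by
    calc log a ≤ log (2 * (a - x)) := log_le_log (by linarith) (by linarith)
      _ = log 2 + log (a - x) := log_mul two_ne_zero hax.ne'
      _ ≤ log (a - x) + 1 := by linarith [log_two_lt_d9]
  have hlog_ax : (a - x) * (log a - log (a - x)) ≤ x := by
    have h := log_le_sub_one_of_pos (div_pos (by linarith : 0 < a) hax)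
    rw [log_div (by linarith) hax.ne'] at h
    calc (a - x) * (log a - log (a - x)) ≤ (a - x) * (a / (a - x) - 1) :=
          mul_le_mul_of_nonneg_left h hax.le
      _ = x := by field_simp; ring
  rw [mul_H2_div hx (by linarith)]
  linarith [mul_le_mul_of_nonneg_left hlog_a hx.le]

lemma mul_log_sub_log_le_mul_H2_div {b a : ℝ} (hb : 0 < b) (hba : b ≤ a) :
    b * (log a - log b) ≤ a * H2 (b / a) := by
  have ha : 0 < a := hb.trans_le hba
  have hq : 0 ≤ 1 - b / a := by rw [sub_nonneg, div_le_one ha]; exact hba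
  have h : (1 - b / a) * log (1 - b / a) ≤ 0 :=
    mul_nonpos_of_nonneg_of_nonpos hq (log_nonpos hq (by linarith [div_pos hb ha]))
  calc b * (log a - log b) = a * (-(b / a) * log (b / a)) := by
        rw [log_div hb.ne' ha.ne']; field_simp; ring
    _ ≤ a * H2 (b / a) := by
        rw [H2]; exact mul_le_mul_of_nonneg_left (by linarith) ha.le

noncomputable def objective (A B a k x : ℝ) : ℝ := A * log (1 + B * x) - a / k * H2 (x / a)

section Objective

variable {A B a k x : ℝ}

lemma mul_objective (hk : k ≠ 0) :
    k * objective A B a k x = A * k * log (1 + B * x) - a * H2 (x / a) := by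
  rw [objective]
  field_simp

lemma hasDerivAt_objective (hBx : 0 < 1 + B * x) (hx : 0 < x) (hxa : x < a) :
    HasDerivAt (objective A B a k)
      (A * (B / (1 + B * x)) - (log (a - x) - log x) / k) x := by
  have ha : 0 < a := hx.trans hxa
  have hlog : HasDerivAt (fun y => log (1 + B * y)) (B * 1 / (1 + B * x)) x :=
    (((hasDerivAt_id x).const_mul B).const_add 1).log hBx.ne'
  have hH : HasDerivAt (fun y => H2 (y / a)) ((log (1 - x / a) - log (x / a)) * (1 / a)) x := by
    rw [H2_eq_binEntropy]
    refine (hasDerivAt_binEntropy ?_ ?_).comp x ((hasDerivAt_id x).div_const a)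
    · exact (div_pos hx ha).ne'
    · rw [ne_eq, div_eq_one_iff_eq ha.ne']; exact hxa.ne
  refine ((hlog.const_mul A).sub (hH.const_mul (a / k))).congr_deriv ?_
  rw [one_sub_div ha.ne', log_div (by linarith) ha.ne', log_div hx.ne' ha.ne']
  field_simp
  ring

lemma mul_mul_eq_of_isLocalMin_objective (hk : k ≠ 0) (hBx : 0 < 1 + B * x) (hx : 0 < x) (hxa : x < a)
    (h : IsLocalMin (objective A B a k) x) :
    A * B * k = (log (a - x) - log x) * (1 + B * x) := by
  have h0 := h.hasDerivAt_eq_zero (hasDerivAt_objective hBx hx hxa)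
  field_simp at h0
  linarith

variable {L : ℝ}

lemma one_add_mul_le_of_objective_le {w : ℝ} (hB : 0 < B) (hk : 0 < k) (hw : 0 < w) (hwa : w ≤ a)
    (hx : 0 < x) (hcrit : A * B * k = L * (1 + B * x)) (hL : 2 ≤ L)
    (hH : a * H2 (x / a) ≤ x * (L + 2))
    (hmin : objective A B a k x ≤ objective A B a k w) :
    1 + B * x ≤ exp 2 * (1 + B * w) := by
  have hBx : 0 < 1 + B * x := by positivity
  have hBw : 0 < 1 + B * w := by positivity
  have hHw : 0 ≤ a * H2 (w / a) := mul_nonneg (hw.trans_le hwa).le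
    (H2_eq_binEntropy ▸ binEntropy_nonneg (div_pos hw (hw.trans_le hwa)).le
      (div_le_one_of_le₀ hwa (hw.trans_le hwa).le))
  have hkmin := mul_le_mul_of_nonneg_left hmin hk.le
  rw [mul_objective hk.ne', mul_objective hk.ne'] at hkmin
  set Δ := log (1 + B * x) - log (1 + B * w)
  have hΔ : L * (1 + B * x) * Δ ≤ L * (1 + B * x) * 2 :=
    calc L * (1 + B * x) * Δ = B * (A * k * Δ) := by rw [← hcrit]; ring
      _ ≤ B * (x * (L + 2)) := mul_le_mul_of_nonneg_left (by linarith) hB.le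
      _ ≤ L * (1 + B * x) * 2 := by nlinarith
  have hΔ2 : Δ ≤ 2 := le_of_mul_le_mul_left hΔ (by positivity)
  rw [← log_le_log_iff hBx (by positivity), log_mul (exp_pos 2).ne' hBw.ne', log_exp]
  linarith

lemma le_two_mul_log_of_objective_le {b V : ℝ} (hB : 0 < B) (hk : 0 < k) (hb : 0 < b)
    (hba : b ≤ a) (hx : 0 < x) (hcrit : A * B * k = L * (1 + B * x)) (hL : 2 ≤ L)
    (hLa : L ≤ log a) (hH : a * H2 (x / a) ≤ x * (L + 2)) (hV : 1 + B * x ≤ V)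
    (hb_large : V / B * (log (1 + B * b) + 2) ≤ b / 2)
    (hmin : objective A B a k x ≤ objective A B a k b) :
    L ≤ 2 * log b := by
  have hAk : A * k ≤ L * (V / B) := by
    rw [mul_div_assoc', le_div_iff₀ hB]
    calc A * k * B = L * (1 + B * x) := by rw [← hcrit]; ring
      _ ≤ L * V := mul_le_mul_of_nonneg_left hV (by linarith)
  have hAk0 : 0 ≤ A * k := by
    have : 0 < A * k * B := by rw [mul_right_comm, hcrit]; positivity
    exact (pos_of_mul_pos_left this hB.le).le
  have hxV : x ≤ V / B := by rw [le_div_iff₀ hB]; linarith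
  have hkmin := mul_le_mul_of_nonneg_left hmin hk.le
  rw [mul_objective hk.ne', mul_objective hk.ne'] at hkmin
  have hlog_x : 0 ≤ log (1 + B * x) := log_nonneg (by nlinarith)
  have hlog_b : 0 ≤ log (1 + B * b) := log_nonneg (by nlinarith)
  have hbL : b * (L - log b) ≤ L * (b / 2) :=
    calc b * (L - log b) ≤ b * (log a - log b) := by gcongr
      _ ≤ a * H2 (b / a) := mul_log_sub_log_le_mul_H2_div hb hba
      _ ≤ A * k * log (1 + B * b) + x * (L + 2) := by nlinarith
      _ ≤ L * (V / B) * log (1 + B * b) + V / B * (2 * L) := by gcongr <;> linarith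
      _ = L * (V / B * (log (1 + B * b) + 2)) := by ring
      _ ≤ L * (b / 2) := by gcongr
  nlinarith

lemma mul_le_log_of_isMinOn_objective {w b : ℝ} (hB : 0 < B) (hk : 0 < k) (hw : 1 ≤ w)
    (hba : b ≤ a) (hmin : IsMinOn (objective A B a k) (Icc w b) x) (hwx : w < x) (hxb : x < b)
    (hx_small : 2 * (1 + B * x) ≤ A * B * k)
    (hb_large : exp 2 * (1 + B * w) / B * (log (1 + B * b) + 2) ≤ b / 2) :
    A * B * k ≤ 2 * log b * (exp 2 * (1 + B * w)) := by
  have hx : 0 < x := by linarith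
  have hwb : w ≤ b := by linarith
  have hBx : 0 < 1 + B * x := by positivity
  have hcrit := mul_mul_eq_of_isLocalMin_objective hk.ne' hBx hx (hxb.trans_le hba)
    (hmin.isLocalMin (Icc_mem_nhds hwx hxb))
  set L := log (a - x) - log x
  have hL : 2 ≤ L := le_of_mul_le_mul_right (hcrit ▸ hx_small) hBx
  have h2x : 2 * x ≤ a := by
    have : log x ≤ log (a - x) := by linarith
    linarith [(log_le_log_iff hx (by linarith)).1 this]
  have hLa : L ≤ log a := by
    linarith [log_le_log (by linarith) (by linarith : a - x ≤ a), log_nonneg (by linarith : 1 ≤ x)]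
  have hH := mul_H2_div_le hx h2x
  have hV := one_add_mul_le_of_objective_le hB hk (by linarith) (by linarith) hx hcrit hL hH
    (isMinOn_iff.1 hmin w (left_mem_Icc.2 hwb))
  have hLb := le_two_mul_log_of_objective_le hB hk (by linarith) hba hx hcrit hL hLa hH hV
    hb_large (isMinOn_iff.1 hmin b (right_mem_Icc.2 hwb))
  rw [hcrit]
  exact mul_le_mul hLb hV hBx.le (by linarith)

end Objective

lemma tendsto_atTop_of_tendsto_mul_exp_neg {k : ℕ → ℝ} {δ : ℝ} (hδ : 0 < δ)
    (h : Tendsto (fun n : ℕ => (n : ℝ) * exp (-δ * k n)) atTop (𝓝 0)) :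
    Tendsto k atTop atTop := by
  have hexp : Tendsto (fun n => exp (-δ * k n)) atTop (𝓝 0) := by
    refine squeeze_zero' (.of_forall fun n => (exp_pos _).le) ?_ h
    filter_upwards [eventually_ge_atTop 1] with n hn
    exact le_mul_of_one_le_left (exp_pos _).le (by exact_mod_cast hn)
  have hδk : Tendsto (fun n => δ * k n) atTop atTop :=
    tendsto_neg_atBot_iff.1 (by simpa only [neg_mul] using tendsto_exp_comp_nhds_zero.1 hexp)
  simpa [hδ.ne'] using hδk.atTop_div_const hδ

lemma tendsto_atTop_of_tendsto_div {ι : Type*} {l : Filter ι} {k b : ι → ℝ} {b0 : ℝ}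
    (hb0 : 0 < b0) (hk : Tendsto k l atTop) (hkb : Tendsto (fun i => k i / b i) l (𝓝 b0)) :
    Tendsto b l atTop := by
  refine (hk.atTop_mul_pos (inv_pos.2 hb0) (hkb.inv₀ hb0.ne')).congr' ?_
  filter_upwards [hk.eventually_gt_atTop 0] with i hi
  rw [inv_div, mul_div_cancel₀ _ hi.ne']

lemma eventually_lt_of_lt_liminf_of_ne_zero {ι : Type*} {l : Filter ι} {u : ι → ℝ} {x : ℝ}
    (hx : x < liminf u l) (h0 : liminf u l ≠ 0) : ∀ᶠ i in l, x < u i :=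
  eventually_lt_of_lt_liminf hx (not_not.1 fun hu => h0 (Real.liminf_of_not_isBoundedUnder hu))

lemma eventually_le_mul_of_isLittleO {f : ℝ → ℝ} (h : f =o[atTop] id) {ε : ℝ} (hε : 0 < ε) :
    ∀ᶠ x in atTop, f x ≤ ε * x := by
  filter_upwards [h.bound hε, eventually_ge_atTop 0] with x hfx hx
  rw [norm_eq_abs, norm_eq_abs, id, abs_of_nonneg hx] at hfx
  exact (le_abs_self _).trans hfx

lemma isLittleO_log_one_add_mul {B : ℝ} (hB : 0 < B) :
    (fun x => log (1 + B * x)) =o[atTop] id := by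
  have h1 : Tendsto (fun x => 1 + B * x) atTop atTop :=
    tendsto_atTop_add_const_left _ 1 (tendsto_id.const_mul_atTop hB)
  have h2 : (fun x => 1 + B * x) =O[atTop] id :=
    (isLittleO_const_id_atTop 1).isBigO.add ((isBigO_refl id atTop).const_mul_left B)
  exact (isLittleO_log_id_atTop.comp_tendsto h1).trans_isBigO h2

lemma eq_or_le_of_isMinOn_objective {A A'' B a b b0 c k w x : ℝ} (hA : 0 < A) (hB : 0 < B)
    (hb0 : 0 < b0) (hw : 1 ≤ w) (hba : b ≤ a) (hc1 : c ≤ 1) (hc : 64 * c ≤ A * b0) (hA'' : A / 2 ≤ A'')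
    (hk : 0 < k) (hkb : b0 / 2 * b ≤ k) (hcb : 1 ≤ B * (c * b))
    (hb_large : exp 2 * (1 + B * w) / B * (log (1 + B * b) + 2) ≤ b / 2)
    (hb_log : 2 * log b * (exp 2 * (1 + B * w)) ≤ A * B * b0 / 8 * b)
    (hmin : IsMinOn (objective A'' B a k) (Icc w b) x) (hx : x ∈ Icc w b) :
    x = w ∨ c * b ≤ x := by
  rcases hx.1.eq_or_lt with hwx | hwx
  · exact Or.inl hwx.symm
  refine Or.inr (le_of_not_gt fun hxc => ?_)
  have hb : 0 < b := by linarith [hx.2]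
  have hxb : x < b := hxc.trans_le (mul_le_of_le_one_left hb.le hc1)
  have h64 : 64 * (B * (c * b)) ≤ A * B * b0 * b := by
    nlinarith [mul_le_mul_of_nonneg_right hc (mul_pos hB hb).le]
  have hA''0 : 0 < A'' := by linarith
  have hlow : A * B * b0 / 4 * b ≤ A'' * B * k :=
    calc A * B * b0 / 4 * b = A / 2 * B * (b0 / 2 * b) := by ring
      _ ≤ A'' * B * k := by gcongr
  have hup := mul_le_log_of_isMinOn_objective hB hk hw hba hmin hwx hxb
    (by nlinarith) hb_large
  linarith

lemma eventually_eq_or_le_of_isMinOn_objective {A B b0 c w : ℝ} {A' a b k : ℕ → ℝ}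
    (hA : 0 < A) (hB : 0 < B) (hb0 : 0 < b0) (hw : 1 ≤ w) (hc0 : 0 < c) (hc1 : c ≤ 1)
    (hc : 64 * c ≤ A * b0) (hk : ∀ ℓ, 0 < k ℓ) (hba : ∀ ℓ, b ℓ ≤ a ℓ)
    (hb : Tendsto b atTop atTop) (hA' : ∀ᶠ ℓ in atTop, A / 2 ≤ A' ℓ)
    (hkb : ∀ᶠ ℓ in atTop, b0 / 2 * b ℓ ≤ k ℓ) :
    ∀ᶠ ℓ in atTop, ∀ x ∈ Icc w (b ℓ),
      IsMinOn (objective (A' ℓ) B (a ℓ) (k ℓ)) (Icc w (b ℓ)) x → x = w ∨ c * b ℓ ≤ x := by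
  set V := exp 2 * (1 + B * w)
  have hlarge : ∀ᶠ X in atTop, 1 ≤ B * (c * X) ∧
      V / B * (log (1 + B * X) + 2) ≤ X / 2 ∧ 2 * log X * V ≤ A * B * b0 / 8 * X := by
    filter_upwards [(tendsto_id.const_mul_atTop (mul_pos hB hc0)).eventually_ge_atTop 1,
      eventually_le_mul_of_isLittleO (((isLittleO_log_one_add_mul hB).add
        (isLittleO_const_id_atTop 2)).const_mul_left (V / B)) (half_pos one_pos),
      eventually_le_mul_of_isLittleO (isLittleO_log_id_atTop.const_mul_left (2 * V))
        (by positivity : 0 < A * B * b0 / 8)] with X h1 h2 h3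
    exact ⟨by simpa only [id, mul_assoc] using h1, by linarith, by linarith⟩
  filter_upwards [hA', hkb, hb.eventually hlarge] with ℓ hA'ℓ hkbℓ ⟨hcb, hb_large, hb_log⟩
  exact fun x hx hmin => eq_or_le_of_isMinOn_objective hA hB hb0 hw (hba ℓ) hc1 hc hA'ℓ
    (hk ℓ) hkbℓ hcb hb_large hb_log hmin hx

theorem stmt7_general (A B w : ℝ) (hA : 0 < A) (hB : 0 < B) (hw : 1 ≤ w)
    (k a b : ℕ → ℝ) (hkpos : ∀ ℓ, 0 < k ℓ) (hbpos : ∀ ℓ, 0 < b ℓ)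
    (hba : ∀ ℓ, b ℓ ≤ a ℓ)
    (a0 : ℝ) (ha0 : 0 ≤ a0)
    (b0 : ℝ) (hb0 : 0 < b0)
    (hkb : Tendsto (fun ℓ : ℕ => k ℓ / b ℓ) atTop (nhds b0))
    (hexp : ∀ δ : ℝ, 0 < δ →
      Tendsto (fun ℓ : ℕ => (ℓ : ℝ) * Real.exp (-δ * k ℓ)) atTop (nhds 0))
    (A' : ℕ → ℝ) (hA' : Filter.liminf A' atTop = A) :
    ∃ L : ℕ, ∀ ℓ ≥ L, ∀ w' : ℝ, w' ∈ Set.Icc w (b ℓ) →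
      IsMinOn (fun x : ℝ => A' ℓ * Real.log (1 + B * x) - (a ℓ / k ℓ) * H2 (x / a ℓ))
        (Set.Icc w (b ℓ)) w' →
      w' = w ∨ w' ∈ Set.Icc (min (b0 * A / (64 * (1 + A * a0))) 1 * b ℓ) (b ℓ) := by
  set c := min (b0 * A / (64 * (1 + A * a0))) 1
  have hAa0 : 1 ≤ 1 + A * a0 := by nlinarith
  have hc0 : 0 < c := lt_min (by positivity) one_pos
  have hc : 64 * c ≤ A * b0 :=
    calc 64 * c ≤ 64 * (b0 * A / (64 * (1 + A * a0))) := by gcongr; exact min_le_left _ _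
      _ = b0 * A / (1 + A * a0) := by field_simp
      _ ≤ b0 * A := div_le_self (by positivity) hAa0
      _ = A * b0 := mul_comm _ _
  have hb_top := tendsto_atTop_of_tendsto_div hb0
    (tendsto_atTop_of_tendsto_mul_exp_neg one_pos (hexp 1 one_pos)) hkb
  have hkb' : ∀ᶠ ℓ in atTop, b0 / 2 * b ℓ ≤ k ℓ :=
    (hkb.eventually (eventually_ge_nhds (half_lt_self hb0))).mono
      fun ℓ h => (le_div_iff₀ (hbpos ℓ)).1 h
  have hA'_ev : ∀ᶠ ℓ in atTop, A / 2 ≤ A' ℓ :=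
    (eventually_lt_of_lt_liminf_of_ne_zero (by rw [hA']; exact half_lt_self hA)
      (by rw [hA']; exact hA.ne')).mono fun _ h => h.le
  obtain ⟨L, hL⟩ := (eventually_eq_or_le_of_isMinOn_objective hA hB hb0 hw hc0
    (min_le_right _ _) hc hkpos hba hb_top hA'_ev hkb').exists_forall_of_atTop
  exact ⟨L, fun ℓ hℓ x hx hmin => (hL ℓ hℓ x hx hmin).imp_right fun h => ⟨h, hx.2⟩⟩

/-- For large `ℓ`, any minimizer of `h_ℓ(w) = A_ℓ log(1+Bw) - (a_ℓ/k_ℓ) H₂(w/a_ℓ)` over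
`[w̄, b_ℓ]` is either `w̄` or lies in `[c b_ℓ, b_ℓ]` with
`c = min (bA/(64(1+Aa))) 1`. -/
theorem stmt7 (A B w : ℝ) (hA : 0 < A) (hB : 0 < B) (hw : 1 ≤ w)
    (k a b : ℕ → ℝ) (hkpos : ∀ ℓ, 0 < k ℓ) (hapos : ∀ ℓ, 0 < a ℓ) (hbpos : ∀ ℓ, 0 < b ℓ)
    (hba : ∀ ℓ, b ℓ ≤ a ℓ)
    (a0 : ℝ) (ha0 : 0 ≤ a0)
    (hka : Tendsto (fun ℓ : ℕ => k ℓ / a ℓ) atTop (nhds a0))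
    (b0 : ℝ) (hb0 : 0 < b0)
    (hkb : Tendsto (fun ℓ : ℕ => k ℓ / b ℓ) atTop (nhds b0))
    (hexp : ∀ δ : ℝ, 0 < δ →
      Tendsto (fun ℓ : ℕ => (ℓ : ℝ) * Real.exp (-δ * k ℓ)) atTop (nhds 0))
    (A' : ℕ → ℝ) (hA' : Filter.liminf A' atTop = A) :
    ∃ L : ℕ, ∀ ℓ ≥ L, ∀ w' : ℝ, w' ∈ Set.Icc w (b ℓ) →
      IsMinOn (fun x : ℝ => A' ℓ * Real.log (1 + B * x) - (a ℓ / k ℓ) * H2 (x / a ℓ))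
        (Set.Icc w (b ℓ)) w' →
      w' = w ∨ w' ∈ Set.Icc (min (b0 * A / (64 * (1 + A * a0))) 1 * b ℓ) (b ℓ) :=
  stmt7_general A B w hA hB hw k a b hkpos hbpos hba a0 ha0 b0 hb0 hkb hexp A' hA'
end

section
/- Let v₁, v₂, v₃ ≥ 0, λ > 0 and ρ ∈ (0,1] with λρ < 1. Let Z₁, Z₂, Z₃ be independent centered Gaussian random variables with variances v₁, v₂, v₃ respectively, and let φ(u) = (2π)^{−1/2} e^{−u²/2} denote the standard Gaussian density. Then ∫_ℝ E_{Z₃}[ E_{Z₁}[ φ(y − Z₃ − Z₁)^{1−λρ} ] · ( E_{Z₂}[ φ(y − Z₃ − Z₂)^{λ} ] )^{ρ} ] dy = (1 + λ v₂)^{(1−ρ)/2} · ( 1 + λ(1−λρ) v₂ + λρ(1−λρ) v₁ )^{−1/2}. In particular the value does not depend on v₃. -/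
open MeasureTheory ProbabilityTheory

/-!
A power `φ(u)^p` of the standard Gaussian density is `(2π)^(-p/2)` times the kernel
`e^(-p u²/2)`, and averaging a kernel `e^(-α u²/2)` over a centred Gaussian shift of variance `v`
gives `(1 + αv)^(-1/2) e^(-α/(1+αv) u²/2)`. Scaled kernels `c e^(-a u²/2)` are also closed under
products and real powers, so after the `Z₁`, `Z₂` averages the integrand is `c e^(-a (y - z₃)²/2)`.
Integrating over `y ∈ ℝ` absorbs the `Z₃` average, since a probability average of translates has
the same Lebesgue integral; this is why `v₃` drops out. What remains is `c √(2π/a)`, which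
simplifies to the claimed value because the exponents `1 - λρ` and `λρ` add up to `1`.
-/

open Real
open scoped NNReal

noncomputable def gaussianKernel (a x : ℝ) : ℝ := exp (-(a * x ^ 2) / 2)

lemma gaussianKernel_pos (a x : ℝ) : 0 < gaussianKernel a x := exp_pos _

lemma gaussianKernel_mul (a b x : ℝ) :
    gaussianKernel a x * gaussianKernel b x = gaussianKernel (a + b) x := by
  rw [gaussianKernel, gaussianKernel, gaussianKernel, ← exp_add]
  ring_nf

lemma gaussianKernel_rpow (a ρ x : ℝ) : gaussianKernel a x ^ ρ = gaussianKernel (ρ * a) x := by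
  rw [gaussianKernel, gaussianKernel, ← exp_mul]
  ring_nf

lemma integral_gaussianKernel (a : ℝ) : ∫ x, gaussianKernel a x = √(2 * π / a) := by
  simp_rw [gaussianKernel, show ∀ x : ℝ, -(a * x ^ 2) / 2 = -(a / 2) * x ^ 2 from
    fun x ↦ by ring]
  rw [integral_gaussian]
  congr 1
  field_simp

lemma integral_exp_neg_mul_sq_add_mul {b : ℝ} (hb : 0 < b) (c : ℝ) :
    ∫ x, exp (-b * x ^ 2 + c * x) = √(π / b) * exp (c ^ 2 / (4 * b)) := by
  have h (x : ℝ) : -b * x ^ 2 + c * x = -b * (x - c / (2 * b)) ^ 2 + c ^ 2 / (4 * b) := by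
    field_simp
    ring
  simp_rw [h, exp_add, integral_mul_const]
  rw [integral_sub_right_eq_self (fun x ↦ exp (-b * x ^ 2)), integral_gaussian]

lemma integral_gaussianKernel_sub_gaussianReal {α : ℝ} (hα : 0 ≤ α) (v : ℝ≥0) (x : ℝ) :
    ∫ z, gaussianKernel α (x - z) ∂gaussianReal 0 v
      = (1 + α * v) ^ (-(1 / 2) : ℝ) * gaussianKernel (α / (1 + α * v)) x := by
  rcases eq_or_ne v 0 with rfl | hv
  · simp
  have hv₀ : (0 : ℝ) < v := by positivity
  have hαv : 0 < 1 + α * v := by positivity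
  have hb : 0 < (1 + α * v) / (2 * v) := by positivity
  have h_density (z : ℝ) : gaussianPDFReal 0 v z • gaussianKernel α (x - z)
      = (√(2 * π * v))⁻¹ * gaussianKernel α x
        * exp (-((1 + α * v) / (2 * v)) * z ^ 2 + α * x * z) := by
    simp only [gaussianPDFReal, gaussianKernel, smul_eq_mul, mul_assoc, ← exp_add]
    congr 2
    field_simp
    ring
  simp_rw [integral_gaussianReal_eq_integral_smul hv, h_density, integral_const_mul,
    integral_exp_neg_mul_sq_add_mul hb]
  have h_const : (√(2 * π * v))⁻¹ * √(π / ((1 + α * v) / (2 * v)))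
      = (1 + α * v) ^ (-(1 / 2) : ℝ) := by
    rw [rpow_neg hαv.le, ← sqrt_eq_rpow, ← sqrt_inv, ← sqrt_inv, ← sqrt_mul (by positivity)]
    congr 1
    field_simp
  have h_exp : gaussianKernel α x * exp ((α * x) ^ 2 / (4 * ((1 + α * v) / (2 * v))))
      = gaussianKernel (α / (1 + α * v)) x := by
    rw [gaussianKernel, gaussianKernel, ← exp_add]
    congr 1
    field_simp
    ring
  rw [← h_const, ← h_exp]
  ring

lemma integral_integral_gaussianKernel_sub_gaussianReal {a : ℝ} (ha : 0 < a) (v : ℝ≥0) :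
    ∫ y, ∫ z, gaussianKernel a (y - z) ∂gaussianReal 0 v = √(2 * π / a) := by
  have hav : 0 < 1 + a * v := by positivity
  simp_rw [integral_gaussianKernel_sub_gaussianReal ha.le, integral_const_mul,
    integral_gaussianKernel]
  rw [div_div_eq_mul_div, mul_div_right_comm, sqrt_mul' _ hav.le, sqrt_eq_rpow (1 + a * v),
    mul_left_comm, ← rpow_add hav]
  norm_num

lemma stdGaussianDensity_rpow (p u : ℝ) :
    (exp (-u ^ 2 / 2) / √(2 * π)) ^ p = (2 * π) ^ (-p / 2) * gaussianKernel p u := by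
  rw [div_rpow (exp_pos _).le (sqrt_nonneg _), ← exp_mul, sqrt_eq_rpow,
    ← rpow_mul (by positivity), div_eq_mul_inv, ← rpow_neg (by positivity), mul_comm,
    gaussianKernel]
  ring_nf

lemma integral_stdGaussianDensity_sub_rpow_gaussianReal {p : ℝ} (hp : 0 ≤ p) (v : ℝ≥0) (x : ℝ) :
    ∫ z, (exp (-(x - z) ^ 2 / 2) / √(2 * π)) ^ p ∂gaussianReal 0 v
      = (2 * π) ^ (-p / 2) * (1 + p * v) ^ (-(1 / 2) : ℝ) * gaussianKernel (p / (1 + p * v)) x := by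
  simp_rw [stdGaussianDensity_rpow, integral_const_mul,
    integral_gaussianKernel_sub_gaussianReal hp, mul_assoc]

lemma mul_mul_gaussianKernel_rpow {c₂ : ℝ} (hc₂ : 0 ≤ c₂) (c₁ a b ρ x : ℝ) :
    c₁ * gaussianKernel a x * (c₂ * gaussianKernel b x) ^ ρ
      = c₁ * c₂ ^ ρ * gaussianKernel (a + ρ * b) x := by
  rw [mul_rpow hc₂ (gaussianKernel_pos b x).le, gaussianKernel_rpow, ← gaussianKernel_mul]
  ring

lemma gallager_moment_constant_eq {A B p q ρ : ℝ} (hA : 0 < A) (hB : 0 < B)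
    (hD : 0 < p * B + ρ * q * A) (hpq : p + q * ρ = 1) :
    (2 * π) ^ (-p / 2) * A ^ (-(1 / 2) : ℝ) * ((2 * π) ^ (-q / 2) * B ^ (-(1 / 2) : ℝ)) ^ ρ *
        √(2 * π / (p / A + ρ * (q / B)))
      = B ^ ((1 - ρ) / 2) * (p * B + ρ * q * A) ^ (-(1 / 2) : ℝ) := by
  have h_prec : p / A + ρ * (q / B) = (p * B + ρ * q * A) / (A * B) := by
    field_simp
  rw [h_prec, div_div_eq_mul_div, sqrt_eq_rpow]
  -- after taking logarithms the identity is linear in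
  -- `log (2π)`, `log A`, `log B` and `log (p * B + ρ * q * A)`
  simp (disch := positivity) only [rpow_def_of_pos, ← exp_add, log_div, log_mul, log_exp]
  obtain rfl : p = 1 - q * ρ := by linarith
  congr 1
  ring

theorem stmt12_general (v₁ v₂ v₃ lam ρ : ℝ) (hv₁ : 0 ≤ v₁) (hv₂ : 0 ≤ v₂)
    (hlam : 0 < lam) (hρ : ρ ∈ Set.Ioc (0 : ℝ) 1) (hlr : lam * ρ < 1) :
    (∫ y : ℝ,
      ∫ z₃,
        (∫ z₁, (Real.exp (-(y - z₃ - z₁) ^ 2 / 2) / Real.sqrt (2 * Real.pi))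
            ^ (1 - lam * ρ) ∂(gaussianReal 0 v₁.toNNReal))
          * (∫ z₂, (Real.exp (-(y - z₃ - z₂) ^ 2 / 2) / Real.sqrt (2 * Real.pi))
              ^ lam ∂(gaussianReal 0 v₂.toNNReal)) ^ ρ
        ∂(gaussianReal 0 v₃.toNNReal))
    = (1 + lam * v₂) ^ ((1 - ρ) / 2) *
        (1 + lam * (1 - lam * ρ) * v₂ + lam * ρ * (1 - lam * ρ) * v₁) ^ (-(1 / 2) : ℝ) := by
  have hρ₀ : 0 < ρ := hρ.1
  have hp : 0 < 1 - lam * ρ := by linarith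
  simp (disch := positivity) only [integral_stdGaussianDensity_sub_rpow_gaussianReal hp.le,
    integral_stdGaussianDensity_sub_rpow_gaussianReal hlam.le, mul_mul_gaussianKernel_rpow,
    integral_const_mul, Real.coe_toNNReal _ hv₁, Real.coe_toNNReal _ hv₂]
  rw [integral_integral_gaussianKernel_sub_gaussianReal (by positivity),
    gallager_moment_constant_eq (by positivity) (by positivity) (by positivity) (by ring)]
  congr 2
  ring

/-- The Gallager-type moment `m_{λ,ρ}`: with `φ` the standard Gaussian density and
independent `Z₁ ~ N(0,v₁)`, `Z₂ ~ N(0,v₂)`, `Z₃ ~ N(0,v₃)`,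
`∫ E_{Z₃}[E_{Z₁}[φ(y-Z₃-Z₁)^{1-λρ}] (E_{Z₂}[φ(y-Z₃-Z₂)^λ])^ρ] dy
  = (1+λv₂)^{(1-ρ)/2} (1+λ(1-λρ)v₂+λρ(1-λρ)v₁)^{-1/2}`,
independently of `v₃`. -/
theorem stmt12 (v₁ v₂ v₃ lam ρ : ℝ) (hv₁ : 0 ≤ v₁) (hv₂ : 0 ≤ v₂) (hv₃ : 0 ≤ v₃)
    (hlam : 0 < lam) (hρ : ρ ∈ Set.Ioc (0 : ℝ) 1) (hlr : lam * ρ < 1) :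
    (∫ y : ℝ,
      ∫ z₃,
        (∫ z₁, (Real.exp (-(y - z₃ - z₁) ^ 2 / 2) / Real.sqrt (2 * Real.pi))
            ^ (1 - lam * ρ) ∂(gaussianReal 0 v₁.toNNReal))
          * (∫ z₂, (Real.exp (-(y - z₃ - z₂) ^ 2 / 2) / Real.sqrt (2 * Real.pi))
              ^ lam ∂(gaussianReal 0 v₂.toNNReal)) ^ ρ
        ∂(gaussianReal 0 v₃.toNNReal))
    = (1 + lam * v₂) ^ ((1 - ρ) / 2) *
        (1 + lam * (1 - lam * ρ) * v₂ + lam * ρ * (1 - lam * ρ) * v₁) ^ (-(1 / 2) : ℝ) :=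
  stmt12_general v₁ v₂ v₃ lam ρ hv₁ hv₂ hlam hρ hlr
end

section
/- Let n be a positive integer and v > 0. Let Z = (Z₁, …, Z_n) have independent standard Gaussian entries and S = (S₁, …, S_n) have independent centered Gaussian entries of variance v, with Z and S independent. Then P( Σ_{i=1}^{n} Z_i S_i ≥ (1/2) Σ_{i=1}^{n} S_i² ) ≤ (1 + v/4)^{−n/2}. -/
open MeasureTheory ProbabilityTheory Real
open scoped ENNReal NNReal

lemma lintegral_pi_fin {n : ℕ} (μ : Measure ℝ) [SigmaFinite μ]
    (f : Fin n → ℝ → ℝ≥0∞) (hf : ∀ i, Measurable (f i)) :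
    ∫⁻ x : Fin n → ℝ, ∏ i, f i (x i) ∂(Measure.pi fun _ => μ) = ∏ i, ∫⁻ x, f i x ∂μ := by
  induction n with
  | zero => simp [Measure.pi_univ]
  | succ n ih =>
    have h := measurePreserving_piFinSuccAbove (fun _ : Fin (n + 1) => μ) 0
    have hF : Measurable fun q : ℝ × (Fin n → ℝ) =>
        f 0 q.1 * ∏ j : Fin n, f j.succ (q.2 j) :=
      ((hf 0).comp measurable_fst).mul
        (Finset.measurable_prod _ fun j _ => (hf j.succ).comp ((measurable_pi_apply j).comp measurable_snd))
    calc ∫⁻ x : Fin (n+1) → ℝ, ∏ i, f i (x i) ∂(Measure.pi fun _ => μ)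
        = ∫⁻ x : Fin (n+1) → ℝ,
            (fun q : ℝ × (Fin n → ℝ) => f 0 q.1 * ∏ j : Fin n, f j.succ (q.2 j))
              (MeasurableEquiv.piFinSuccAbove (fun _ => ℝ) 0 x) ∂(Measure.pi fun _ => μ) := by
          refine lintegral_congr fun x => ?_
          simp [MeasurableEquiv.piFinSuccAbove, Fin.prod_univ_succ, Fin.zero_succAbove, Fin.tail]
      _ = ∫⁻ q : ℝ × (Fin n → ℝ), f 0 q.1 * ∏ j : Fin n, f j.succ (q.2 j)
            ∂(μ.prod (Measure.pi fun _ : Fin n => μ)) := h.lintegral_comp hF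
      _ = (∫⁻ x, f 0 x ∂μ) * ∫⁻ y : Fin n → ℝ, ∏ j : Fin n, f j.succ (y j)
            ∂(Measure.pi fun _ : Fin n => μ) := by
          exact lintegral_prod_mul (hf 0).aemeasurable
            (Finset.measurable_prod _ fun (j : Fin n) _ => (hf j.succ).comp (measurable_pi_apply j)).aemeasurable
      _ = ∏ i, ∫⁻ x, f i x ∂μ := by
          rw [ih (fun j => f j.succ) (fun j => hf j.succ), Fin.prod_univ_succ]

lemma lintegral_exp_lin_gaussian1 (t c : ℝ) :
    ∫⁻ x, ENNReal.ofReal (rexp (t * x + c)) ∂(gaussianReal 0 1)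
      = ENNReal.ofReal (rexp (t ^ 2 / 2 + c)) := by
  rw [gaussianReal_of_var_ne_zero 0 one_ne_zero,
    lintegral_withDensity_eq_lintegral_mul _ (measurable_gaussianPDF 0 1) (by fun_prop)]
  have key : ∀ x : ℝ, (gaussianPDF 0 1 * fun x => ENNReal.ofReal (rexp (t * x + c))) x
      = ENNReal.ofReal (rexp (t ^ 2 / 2 + c) * ((√(2 * π))⁻¹ * rexp (-(1/2) * (x - t) ^ 2))) := by
    intro x
    simp only [Pi.mul_apply, gaussianPDF, ← ENNReal.ofReal_mul (gaussianPDFReal_nonneg 0 1 x)]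
    congr 1
    simp only [gaussianPDFReal, NNReal.coe_one, mul_one, sub_zero]
    rw [mul_assoc, ← Real.exp_add, mul_comm (rexp (t ^ 2 / 2 + c)), mul_assoc, ← Real.exp_add]
    congr 2
    ring
  simp_rw [key]
  have hint : Integrable (fun x : ℝ =>
      rexp (t ^ 2 / 2 + c) * ((√(2 * π))⁻¹ * rexp (-(1/2) * (x - t) ^ 2))) :=
    (((integrable_exp_neg_mul_sq (by norm_num : (0:ℝ) < 1/2)).comp_sub_right t).const_mul
      _).const_mul _
  rw [← ofReal_integral_eq_lintegral_ofReal hint (ae_of_all _ fun x => by positivity)]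
  congr 1
  rw [integral_const_mul, integral_const_mul,
    integral_sub_right_eq_self (fun x : ℝ => rexp (-(1/2) * x ^ 2)) t,
    integral_gaussian]
  rw [show π / (1/2) = 2 * π by ring]
  rw [inv_mul_cancel₀ (by positivity : √(2 * π) ≠ 0), mul_one]

lemma lintegral_exp_sq_gaussianv (v : ℝ) (hv : 0 < v) :
    ∫⁻ x, ENNReal.ofReal (rexp (-(x ^ 2) / 8)) ∂(gaussianReal 0 v.toNNReal)
      = ENNReal.ofReal (√(4 / (v + 4))) := by
  have hvne : v.toNNReal ≠ 0 := by
    simp [Real.toNNReal_eq_zero, not_le, hv]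
  have hcoe : ((v.toNNReal : ℝ≥0) : ℝ) = v := Real.coe_toNNReal v hv.le
  have hb : (0:ℝ) < (v + 4) / (8 * v) := by positivity
  rw [gaussianReal_of_var_ne_zero 0 hvne,
    lintegral_withDensity_eq_lintegral_mul _ (measurable_gaussianPDF 0 _) (by fun_prop)]
  have key : ∀ x : ℝ, (gaussianPDF 0 v.toNNReal * fun x => ENNReal.ofReal (rexp (-(x ^ 2) / 8))) x
      = ENNReal.ofReal ((√(2 * π * v))⁻¹ * rexp (-((v + 4) / (8 * v)) * x ^ 2)) := by
    intro x
    simp only [Pi.mul_apply, gaussianPDF, ← ENNReal.ofReal_mul (gaussianPDFReal_nonneg 0 _ x)]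
    congr 1
    simp only [gaussianPDFReal, hcoe, sub_zero]
    rw [mul_assoc, ← Real.exp_add]
    congr 2
    field_simp
    ring
  simp_rw [key]
  have hint : Integrable (fun x : ℝ => (√(2 * π * v))⁻¹ * rexp (-((v + 4) / (8 * v)) * x ^ 2)) :=
    (integrable_exp_neg_mul_sq hb).const_mul _
  rw [← ofReal_integral_eq_lintegral_ofReal hint (ae_of_all _ fun x => by positivity)]
  congr 1
  rw [integral_const_mul, integral_gaussian, ← Real.sqrt_inv, ← Real.sqrt_mul (by positivity)]
  congr 1
  rw [div_div_eq_mul_div]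
  field_simp
  ring

lemma sqrt_pow_eq_rpow (v : ℝ) (hv : 0 < v) (n : ℕ) :
    (√(4 / (v + 4))) ^ n = (1 + v / 4) ^ (-(n : ℝ) / 2) := by
  have h1 : (0:ℝ) < 1 + v / 4 := by positivity
  have h2 : 4 / (v + 4) = (1 + v / 4)⁻¹ := by
    rw [show 1 + v / 4 = (v + 4) / 4 by ring, inv_div]
  rw [h2, Real.sqrt_eq_rpow,
    ← Real.rpow_natCast (((1 + v / 4)⁻¹) ^ ((1:ℝ)/2)) n,
    ← Real.rpow_mul (inv_nonneg.2 h1.le), Real.inv_rpow h1.le, ← Real.rpow_neg h1.le]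
  congr 1
  push_cast
  ring

/-- For independent `Z` (n i.i.d. standard Gaussians) and `S` (n i.i.d. centered Gaussians
of variance `v`), `P(Σ Zᵢ Sᵢ ≥ (1/2) Σ Sᵢ²) ≤ (1 + v/4)^{-n/2}`. -/
theorem stmt17 (n : ℕ) (hn : 0 < n) (v : ℝ) (hv : 0 < v) :
    ((Measure.pi fun _ : Fin n => gaussianReal 0 1).prod
        (Measure.pi fun _ : Fin n => gaussianReal 0 v.toNNReal))
      {p : (Fin n → ℝ) × (Fin n → ℝ) |
        (1 / 2) * ∑ i, (p.2 i) ^ 2 ≤ ∑ i, p.1 i * p.2 i}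
    ≤ ENNReal.ofReal ((1 + v / 4) ^ (-(n : ℝ) / 2)) := by
  set μZ := Measure.pi fun _ : Fin n => gaussianReal 0 1 with hμZ
  set μS := Measure.pi fun _ : Fin n => gaussianReal 0 v.toNNReal with hμS
  set F : (Fin n → ℝ) × (Fin n → ℝ) → ℝ≥0∞ :=
    fun p => ∏ i, ENNReal.ofReal (rexp (p.1 i * p.2 i / 2 - (p.2 i) ^ 2 / 4)) with hFdef
  have hFmeas : Measurable F := Finset.measurable_prod _ fun i _ => by fun_prop
  have hbound : (μZ.prod μS) {p : (Fin n → ℝ) × (Fin n → ℝ) |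
      (1 / 2) * ∑ i, (p.2 i) ^ 2 ≤ ∑ i, p.1 i * p.2 i} ≤ ∫⁻ p, F p ∂(μZ.prod μS) := by
    rw [← setLIntegral_one]
    refine le_trans (setLIntegral_mono hFmeas fun p hp => ?_) (setLIntegral_le_lintegral _ _)
    have h1 : F p = ENNReal.ofReal (rexp (∑ i, (p.1 i * p.2 i / 2 - (p.2 i) ^ 2 / 4))) := by
      rw [Real.exp_sum, ENNReal.ofReal_prod_of_nonneg fun i _ => (Real.exp_nonneg _)]
    have hs : (0:ℝ) ≤ ∑ i, (p.1 i * p.2 i / 2 - (p.2 i) ^ 2 / 4) := by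
      have hp' : (1 / 2) * ∑ i, (p.2 i) ^ 2 ≤ ∑ i, p.1 i * p.2 i := hp
      have e : ∑ i, (p.1 i * p.2 i / 2 - (p.2 i) ^ 2 / 4)
          = (∑ i, p.1 i * p.2 i) / 2 - (∑ i, (p.2 i) ^ 2) / 4 := by
        rw [Finset.sum_sub_distrib, ← Finset.sum_div, ← Finset.sum_div]
      rw [e]
      linarith
    rw [h1]
    calc (1:ℝ≥0∞) = ENNReal.ofReal (rexp 0) := by simp
      _ ≤ _ := ENNReal.ofReal_le_ofReal (Real.exp_le_exp.2 hs)
  refine hbound.trans ?_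
  rw [lintegral_prod_symm' _ hFmeas]
  have inner : ∀ s : Fin n → ℝ, ∫⁻ z, F (z, s) ∂μZ
      = ∏ i : Fin n, ENNReal.ofReal (rexp (-(s i ^ 2) / 8)) := by
    intro s
    have e : (fun z : Fin n → ℝ => F (z, s))
        = fun z => ∏ i, (fun i (x : ℝ) =>
            ENNReal.ofReal (rexp (s i / 2 * x + (-(s i ^ 2) / 4)))) i (z i) := by
      funext z
      exact Finset.prod_congr rfl fun i _ => by
        rw [show z i * s i / 2 - (s i) ^ 2 / 4 = s i / 2 * z i + (-(s i ^ 2) / 4) by ring]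
    rw [e, hμZ, lintegral_pi_fin (gaussianReal 0 1)
      (fun i (x : ℝ) => ENNReal.ofReal (rexp (s i / 2 * x + (-(s i ^ 2) / 4))))
      (fun i => by fun_prop)]
    refine Finset.prod_congr rfl fun i _ => ?_
    rw [lintegral_exp_lin_gaussian1]
    rw [show (s i / 2) ^ 2 / 2 + (-(s i ^ 2) / 4) = -(s i ^ 2) / 8 by ring]
  rw [lintegral_congr inner, hμS,
    lintegral_pi_fin (gaussianReal 0 v.toNNReal)
      (fun _ (x : ℝ) => ENNReal.ofReal (rexp (-(x ^ 2) / 8))) (fun i => by fun_prop),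
    lintegral_exp_sq_gaussianv v hv, Finset.prod_const, Finset.card_univ, Fintype.card_fin,
    ← ENNReal.ofReal_pow (Real.sqrt_nonneg _), sqrt_pow_eq_rpow v hv n]
end
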